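/- First modularity theorem: for each k ∈ {0,1,2,3}, if N ≥ 1 and p, q are natural numbers with 2^(N−1) ≤ p < 2^N ≤ q, then ω_k(p, q) = ω_k(p, 2^N + (q mod 2^N)). -/

import Mathlib

/-- The five states of the Cayley–Dickson twist tree:
corner (C), top (T), left (L), diagonal (D) and interior (I). -/
inductive TwistState : Type
  | C | T | L | D | I
deriving DecidableEq

open TwistState

/-- The interior-node sign `i_k(a,b)` for the doubling product `P_k`, `k ∈ {0,1,2,3}`. -/
def iTwist (k : ℕ) (a b : Bool) : ℤ :=
  match k with
  | 0 => if a = false ∧ b = false then -1 else 1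
  | 1 => -1
  | 2 => 1
  | _ => if a = false ∧ b = false then 1 else -1

/-- One step of the twist-tree finite-state computation: from the current
(state, sign) pair, read a doublet of bits `(a, b)` and move to the new
(state, sign) pair. -/
def twistStep (k : ℕ) : TwistState × ℤ → Bool × Bool → TwistState × ℤ
  | (C, s), (false, false) => (C, s)
  | (C, s), (false, true)  => (T, s)
  | (C, s), (true, false)  => (L, s)
  | (C, s), (true, true)   => (D, -s)
  | (T, s), (false, false) => (T, s)
  | (T, s), (false, true)  => (T, s)
  | (T, s), (true, false)  => (I, s)
  | (T, s), (true, true)   => (I, -s)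
  | (L, s), (false, false) => (L, s)
  | (L, s), (false, true)  => (I, -s)
  | (L, s), (true, false)  => (L, s)
  | (L, s), (true, true)   => (I, s)
  | (D, s), (false, false) => (D, s)
  | (D, s), (false, true)  => (I, -s)
  | (D, s), (true, false)  => (I, s)
  | (D, s), (true, true)   => (D, s)
  | (I, s), (a, b)         => (I, s * iTwist k a b)

/-- The Cayley–Dickson twist `ω_k(p,q)` for the doubling product `P_k`:
write `p` and `q` in binary with a common number of bits (padding with
leading zeros), read the doublets of bits from most significant to least
significant, running the twist-tree automaton starting at state `C` with
sign `+1`; the result is the final sign. -/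
def omegaTwist (k : ℕ) (p q : ℕ) : ℤ :=
  (((List.range (max (Nat.size p) (Nat.size q))).reverse.map
      (fun i => (p.testBit i, q.testBit i))).foldl (twistStep k) (C, 1)).2

/-!
Since `p < 2 ^ N`, every doublet read at a position `≥ N` has first bit `0`. Reading from the
top, the automaton stays at `(C, 1)` on the doublets `(0, 0)` above the leading `1` of `q`,
moves to `(T, 1)` on that leading `1`, and `T` ignores every further doublet whose first bit
is `0`. So for `q` and for `2 ^ N + q % 2 ^ N` alike the automaton reaches `(T, 1)` at
position `N`, and from there on it reads the same `N` low doublets.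
-/

section TwistFold

/-- The state reached from `σ` after reading the doublets of the `n` low bits of `p` and `q`,
most significant first. -/
def twistFold (k p q n : ℕ) (σ : TwistState × ℤ) : TwistState × ℤ :=
  ((List.range n).reverse.map (fun i => (p.testBit i, q.testBit i))).foldl (twistStep k) σ

variable {k p q : ℕ}

@[simp]
lemma twistFold_zero (σ : TwistState × ℤ) : twistFold k p q 0 σ = σ := rfl

lemma twistFold_succ (n : ℕ) (σ : TwistState × ℤ) :
    twistFold k p q (n + 1) σ = twistFold k p q n (twistStep k σ (p.testBit n, q.testBit n)) := by
  simp [twistFold, List.range_succ]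

lemma twistFold_add (m n : ℕ) (σ : TwistState × ℤ) :
    twistFold k p q (m + n) σ =
      twistFold k p q n (twistFold k (p / 2 ^ n) (q / 2 ^ n) m σ) := by
  induction m generalizing σ with
  | zero => simp
  | succ m ih => rw [Nat.add_right_comm, twistFold_succ, ih, twistFold_succ,
      Nat.testBit_div_two_pow, Nat.testBit_div_two_pow]

lemma twistFold_mod_two_pow (n : ℕ) (σ : TwistState × ℤ) :
    twistFold k (p % 2 ^ n) (q % 2 ^ n) n σ = twistFold k p q n σ := by
  refine congrArg (List.foldl _ σ) (List.map_congr_left fun i hi => ?_)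
  have hi : i < n := List.mem_range.1 (List.mem_reverse.1 hi)
  simp [Nat.testBit_mod_two_pow, hi]

lemma twistFold_zero_zero_C (n : ℕ) (s : ℤ) : twistFold k 0 0 n (C, s) = (C, s) := by
  induction n with
  | zero => rfl
  | succ n ih => rwa [twistFold_succ, Nat.zero_testBit]

lemma twistFold_zero_left_T (n : ℕ) (s : ℤ) : twistFold k 0 q n (T, s) = (T, s) := by
  induction n with
  | zero => rfl
  | succ n ih =>
    rw [twistFold_succ, Nat.zero_testBit]
    cases q.testBit n <;> exact ih

lemma twistFold_zero_left_C {n : ℕ} (hq : 0 < q) (hqn : q < 2 ^ n) (s : ℤ) :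
    twistFold k 0 q n (C, s) = (T, s) := by
  induction n with
  | zero => omega
  | succ n ih =>
    rw [twistFold_succ, Nat.zero_testBit]
    cases hbit : q.testBit n
    · refine ih (Nat.lt_pow_two_of_testBit q fun i hi => ?_)
      rcases hi.eq_or_lt with rfl | hi
      · exact hbit
      · exact Nat.testBit_lt_two_pow (hqn.trans_le (Nat.pow_le_pow_right two_pos hi))
    · exact twistFold_zero_left_T n s

lemma omegaTwist_eq_twistFold {n : ℕ} (hp : p < 2 ^ n) (hq : q < 2 ^ n) :
    omegaTwist k p q = (twistFold k p q n (C, 1)).2 := by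
  set b := max (Nat.size p) (Nat.size q)
  have hb : b ≤ n := max_le (Nat.size_le.2 hp) (Nat.size_le.2 hq)
  have hp0 : p / 2 ^ b = 0 :=
    Nat.div_eq_of_lt <|
      (Nat.lt_size_self p).trans_le (Nat.pow_le_pow_right two_pos (le_max_left _ _))
  have hq0 : q / 2 ^ b = 0 :=
    Nat.div_eq_of_lt <|
      (Nat.lt_size_self q).trans_le (Nat.pow_le_pow_right two_pos (le_max_right _ _))
  rw [← Nat.sub_add_cancel hb, twistFold_add, hp0, hq0, twistFold_zero_zero_C]
  rfl

end TwistFold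

/-- First modularity theorem: for each `k ∈ {0,1,2,3}`, if `N ≥ 1` and
`2^(N-1) ≤ p < 2^N ≤ q`, then `ω_k(p, q) = ω_k(p, 2^N + (q mod 2^N))`. -/
theorem omegaTwist_first_modularity :
    ∀ k ∈ ({0, 1, 2, 3} : Finset ℕ), ∀ N p q : ℕ, 1 ≤ N →
      2 ^ (N - 1) ≤ p → p < 2 ^ N → 2 ^ N ≤ q →
      omegaTwist k p q = omegaTwist k p (2 ^ N + q % 2 ^ N) := by
  intro k _ N p q _ _ hp hq
  set q' := 2 ^ N + q % 2 ^ N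
  have hq_pos : 1 ≤ q := Nat.one_le_two_pow.trans hq
  have hN : 2 ^ N ≤ 2 ^ (q + N) := Nat.pow_le_pow_right two_pos (Nat.le_add_left N q)
  have hq' : q' < 2 ^ (N + 1) := by
    have := Nat.mod_lt q (Nat.two_pow_pos N); rw [pow_succ]; omega
  have hqq : q < 2 ^ (q + N) :=
    Nat.lt_two_pow_self.trans_le (Nat.pow_le_pow_right two_pos (Nat.le_add_right q N))
  have hqq' : q' < 2 ^ (q + N) := hq'.trans_le (Nat.pow_le_pow_right two_pos (by omega))
  have high : ∀ x, 2 ^ N ≤ x → x < 2 ^ (q + N) →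
      twistFold k p x (q + N) (C, 1) = twistFold k p x N (T, 1) := fun x hx hxq => by
    rw [twistFold_add, Nat.div_eq_of_lt hp,
      twistFold_zero_left_C (Nat.div_pos hx (Nat.two_pow_pos N))
        (Nat.div_lt_of_lt_mul (by rwa [← pow_add, Nat.add_comm]))]
  have low : q' % 2 ^ N = q % 2 ^ N := by rw [Nat.add_mod_left, Nat.mod_mod]
  rw [omegaTwist_eq_twistFold (hp.trans_le hN) hqq, omegaTwist_eq_twistFold (hp.trans_le hN) hqq',
    high q hq hqq, high q' (Nat.le_add_right _ _) hqq', ← twistFold_mod_two_pow,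
    ← twistFold_mod_two_pow (q := q'), low]
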